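/- arXiv:1810.03379 — 4 statements merged into one kernel-verified Lean document; each statement's English description precedes it below -/
import Mathlib

section
/- Let λ ≠ 0 and μ be real constants and let v : ℝ² → ℝ be a smooth solution of the potential equation v_t = λ·v_xxx + μ·v_x·v_xx + (μ²/(9λ))·(v_x)³. Then the function w(t,x) = exp(μ·v(t,x)/(3λ)) satisfies the linear equation w_t = λ·w_xxx. -/
/-- If `v` solves the potential equation
`v_t = λ v_xxx + μ v_x v_xx + (μ²/(9λ)) (v_x)³`, then `w = exp(μ v/(3λ))`
solves the linear equation `w_t = λ w_xxx`. -/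
theorem exp_linearization
    (l m : ℝ) (hl : l ≠ 0)
    (v : ℝ → ℝ → ℝ)
    (hv : ContDiff ℝ (⊤ : ℕ∞) (fun p : ℝ × ℝ => v p.1 p.2))
    (hpde : ∀ t x, deriv (fun s => v s x) t =
      l * deriv (deriv (deriv (v t))) x
      + m * deriv (v t) x * deriv (deriv (v t)) x
      + (m ^ 2 / (9 * l)) * (deriv (v t) x) ^ 3) :
    ∀ t x,
      deriv (fun s => Real.exp (m * v s x / (3 * l))) t =
      l * deriv (deriv (deriv (fun y => Real.exp (m * v t y / (3 * l))))) x := by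
  intro t x
  set c : ℝ := m / (3 * l) with hc
  have hv' : ContDiff ℝ (⊤ : ℕ∞) (fun p : ℝ × ℝ => v p.1 p.2) := hv.of_le (by simp)
  -- smoothness of slices
  have hx : ContDiff ℝ (⊤ : ℕ∞) (v t) := by
    have h : (v t) = (fun p : ℝ × ℝ => v p.1 p.2) ∘ (fun y => (t, y)) := rfl
    rw [h]; exact hv'.comp (contDiff_const.prodMk contDiff_id)
  have ht : ContDiff ℝ (⊤ : ℕ∞) (fun s => v s x) := by
    have h : (fun s => v s x) = (fun p : ℝ × ℝ => v p.1 p.2) ∘ (fun s => (s, x)) := rfl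
    rw [h]; exact hv'.comp (contDiff_id.prodMk contDiff_const)
  set A := deriv (v t) with hA0
  set B := deriv A with hB0
  set C := deriv B with hC0
  have hx1 : ContDiff ℝ (⊤ : ℕ∞) A := (contDiff_infty_iff_deriv.mp hx).2
  have hx2 : ContDiff ℝ (⊤ : ℕ∞) B := (contDiff_infty_iff_deriv.mp hx1).2
  have hA : ∀ y, HasDerivAt (v t) (A y) y := fun y =>
    ((hx.differentiable (by norm_num)) y).hasDerivAt
  have hB : ∀ y, HasDerivAt A (B y) y := fun y =>
    ((hx1.differentiable (by norm_num)) y).hasDerivAt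
  have hC : ∀ y, HasDerivAt B (C y) y := fun y =>
    ((hx2.differentiable (by norm_num)) y).hasDerivAt
  set w : ℝ → ℝ := fun y => Real.exp (c * v t y) with hw0
  have hwd : ∀ y, HasDerivAt w (w y * (c * A y)) y := fun y => by
    exact (Real.hasDerivAt_exp _).comp y ((hA y).const_mul c)
  have d1 : deriv w = fun y => w y * (c * A y) := funext fun y => (hwd y).deriv
  have hwd2 : ∀ y, HasDerivAt (fun y => w y * (c * A y))
      (w y * (c * A y) * (c * A y) + w y * (c * B y)) y := fun y =>
    (hwd y).mul ((hB y).const_mul c)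
  have d2 : deriv (deriv w) = fun y => w y * (c * A y) * (c * A y) + w y * (c * B y) := by
    rw [d1]; exact funext fun y => (hwd2 y).deriv
  have hwd3 : ∀ y, HasDerivAt (fun y => w y * (c * A y) * (c * A y) + w y * (c * B y))
      ((w y * (c * A y) * (c * A y) + w y * (c * B y)) * (c * A y)
        + w y * (c * A y) * (c * B y)
        + (w y * (c * A y) * (c * B y) + w y * (c * C y))) y := fun y =>
    (((hwd2 y).mul ((hB y).const_mul c)).add
      ((hwd y).mul ((hC y).const_mul c)))
  have d3 : deriv (deriv (deriv w)) x =
      (w x * (c * A x) * (c * A x) + w x * (c * B x)) * (c * A x)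
        + w x * (c * A x) * (c * B x)
        + (w x * (c * A x) * (c * B x) + w x * (c * C x)) := by
    rw [d2]; exact (hwd3 x).deriv
  -- rewrite goal functions in terms of c
  have he1 : (fun y => Real.exp (m * v t y / (3 * l))) = w := by
    funext y; rw [hw0]; congr 1; rw [hc]; ring
  have he2 : (fun s => Real.exp (m * v s x / (3 * l)))
      = fun s => Real.exp (c * v s x) := by
    funext s; congr 1; rw [hc]; ring
  rw [he1, he2, d3]
  -- time derivative
  have hts : HasDerivAt (fun s => v s x) (deriv (fun s => v s x) t) t :=
    ((ht.differentiable (by norm_num)) t).hasDerivAt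
  have hlt : HasDerivAt (fun s => Real.exp (c * v s x))
      (Real.exp (c * v t x) * (c * deriv (fun s => v s x) t)) t :=
    (Real.hasDerivAt_exp _).comp t (hts.const_mul c)
  rw [hlt.deriv, hpde t x]
  have hwx : w x = Real.exp (c * v t x) := rfl
  rw [hwx, ← hA0, ← hB0, ← hC0, hc]
  field_simp
  ring
end

section
/- Let λ ≠ 0, μ ≠ 0 be real constants and let (u,v) be a smooth solution on a domain Ω ⊆ ℝ² of the system v_x = u, v_t = λ·u_xx + μ·u·u_x + (μ²/(9λ))·u³. Fix ε ∈ ℝ and suppose exp(μ·v(t,x)/(3λ)) − μ·ε > 0 on Ω. Define V(t,x) = (3λ/μ)·ln(exp(μv/(3λ)) − με) and U(t,x) = u·exp(μv/(3λ))/(exp(μv/(3λ)) − με). Then (U,V) also satisfies V_x = U and V_t = λ·U_xx + μ·U·U_x + (μ²/(9λ))·U³ on Ω. -/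
private lemma slice_x {f : ℝ → ℝ → ℝ} {Ω : Set (ℝ × ℝ)} (hΩ : IsOpen Ω)
    (hf : ContDiffOn ℝ (⊤ : ℕ∞) (fun p : ℝ × ℝ => f p.1 p.2) Ω) {t x : ℝ} (h : (t, x) ∈ Ω) :
    ContDiffAt ℝ (⊤ : ℕ∞) (f t) x :=
  (hf.contDiffAt (hΩ.mem_nhds h)).comp x (contDiffAt_const.prodMk contDiffAt_id)

private lemma slice_t {f : ℝ → ℝ → ℝ} {Ω : Set (ℝ × ℝ)} (hΩ : IsOpen Ω)
    (hf : ContDiffOn ℝ (⊤ : ℕ∞) (fun p : ℝ × ℝ => f p.1 p.2) Ω) {t x : ℝ} (h : (t, x) ∈ Ω) :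
    ContDiffAt ℝ (⊤ : ℕ∞) (fun s => f s x) t :=
  (hf.contDiffAt (hΩ.mem_nhds h)).comp t (contDiffAt_id.prodMk contDiffAt_const)

set_option maxHeartbeats 2000000 in
/-- Finite form of the potential symmetry of the system
`v_x = u`, `v_t = λ u_xx + μ u u_x + (μ²/(9λ)) u³` on a domain `Ω`. -/
theorem finite_potential_symmetry
    (l m : ℝ) (hl : l ≠ 0) (hm : m ≠ 0)
    (Ω : Set (ℝ × ℝ)) (hΩ : IsOpen Ω)
    (u v : ℝ → ℝ → ℝ)
    (hu : ContDiffOn ℝ (⊤ : ℕ∞) (fun p : ℝ × ℝ => u p.1 p.2) Ω)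
    (hv : ContDiffOn ℝ (⊤ : ℕ∞) (fun p : ℝ × ℝ => v p.1 p.2) Ω)
    (hvx : ∀ t x, (t, x) ∈ Ω → deriv (v t) x = u t x)
    (hvt : ∀ t x, (t, x) ∈ Ω → deriv (fun s => v s x) t =
      l * deriv (deriv (u t)) x + m * u t x * deriv (u t) x
        + (m ^ 2 / (9 * l)) * (u t x) ^ 3)
    (ε : ℝ)
    (hpos : ∀ t x, (t, x) ∈ Ω → Real.exp (m * v t x / (3 * l)) - m * ε > 0)
    (U V : ℝ → ℝ → ℝ)
    (hVdef : ∀ t x, (t, x) ∈ Ω →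
      V t x = (3 * l / m) * Real.log (Real.exp (m * v t x / (3 * l)) - m * ε))
    (hUdef : ∀ t x, (t, x) ∈ Ω →
      U t x = u t x * Real.exp (m * v t x / (3 * l))
        / (Real.exp (m * v t x / (3 * l)) - m * ε)) :
    (∀ t x, (t, x) ∈ Ω → deriv (V t) x = U t x) ∧
    (∀ t x, (t, x) ∈ Ω → deriv (fun s => V s x) t =
      l * deriv (deriv (U t)) x + m * U t x * deriv (U t) x
        + (m ^ 2 / (9 * l)) * (U t x) ^ 3) := by
  -- generic facts for a fixed time slice
  have hS : ∀ t : ℝ, IsOpen {y : ℝ | (t, y) ∈ Ω} := fun t =>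
    hΩ.preimage (continuous_const.prodMk continuous_id)
  have hvt' : ∀ t y, (t, y) ∈ Ω → HasDerivAt (v t) (u t y) y := by
    intro t y hy
    have h := ((slice_x hΩ hv hy).differentiableAt (by simp)).hasDerivAt
    rwa [hvx t y hy] at h
  have hwne : ∀ t y, (t, y) ∈ Ω → Real.exp (m * v t y / (3 * l)) - m * ε ≠ 0 :=
    fun t y hy => ne_of_gt (hpos t y hy)
  have hE : ∀ t y, (t, y) ∈ Ω → HasDerivAt (fun z => Real.exp (m * v t z / (3 * l)))
      (Real.exp (m * v t y / (3 * l)) * (m * u t y / (3 * l))) y :=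
    fun t y hy => (((hvt' t y hy).const_mul m).div_const (3 * l)).exp
  have hw : ∀ t y, (t, y) ∈ Ω → HasDerivAt (fun z => Real.exp (m * v t z / (3 * l)) - m * ε)
      (Real.exp (m * v t y / (3 * l)) * (m * u t y / (3 * l))) y :=
    fun t y hy => (hE t y hy).sub_const _
  -- Part 1
  have part1 : ∀ t x, (t, x) ∈ Ω → deriv (V t) x = U t x := by
    intro t x hmem
    have hev : V t =ᶠ[nhds x]
        (fun y => (3 * l / m) * Real.log (Real.exp (m * v t y / (3 * l)) - m * ε)) :=
      Filter.eventuallyEq_of_mem ((hS t).mem_nhds hmem) (fun y hy => hVdef t y hy)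
    have hVd : HasDerivAt
        (fun y => (3 * l / m) * Real.log (Real.exp (m * v t y / (3 * l)) - m * ε))
        ((3 * l / m) * (Real.exp (m * v t x / (3 * l)) * (m * u t x / (3 * l))
          / (Real.exp (m * v t x / (3 * l)) - m * ε))) x :=
      ((hw t x hmem).log (hwne t x hmem)).const_mul _
    rw [hev.deriv_eq, hVd.deriv, hUdef t x hmem]
    have h3l : (3 : ℝ) * l ≠ 0 := mul_ne_zero three_ne_zero hl
    field_simp [hwne t x hmem]
  refine ⟨part1, ?_⟩
  intro t x hmem
  have hxS : x ∈ {y : ℝ | (t, y) ∈ Ω} := hmem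
  have hut : ∀ y, (t, y) ∈ Ω → HasDerivAt (u t) (deriv (u t) y) y :=
    fun y hy => ((slice_x hΩ hu hy).differentiableAt (by simp)).hasDerivAt
  -- first x-derivative of U on the slice
  have hUloc : ∀ y, (t, y) ∈ Ω → deriv (U t) y =
      ((deriv (u t) y * Real.exp (m * v t y / (3 * l))
          + u t y * (Real.exp (m * v t y / (3 * l)) * (m * u t y / (3 * l))))
          * (Real.exp (m * v t y / (3 * l)) - m * ε)
        - u t y * Real.exp (m * v t y / (3 * l))
          * (Real.exp (m * v t y / (3 * l)) * (m * u t y / (3 * l))))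
        / (Real.exp (m * v t y / (3 * l)) - m * ε) ^ 2 := by
    intro y hy
    have hev : U t =ᶠ[nhds y]
        (fun z => u t z * Real.exp (m * v t z / (3 * l))
          / (Real.exp (m * v t z / (3 * l)) - m * ε)) :=
      Filter.eventuallyEq_of_mem ((hS t).mem_nhds hy) (fun z hz => hUdef t z hz)
    have hF : HasDerivAt
        (fun z => u t z * Real.exp (m * v t z / (3 * l))
          / (Real.exp (m * v t z / (3 * l)) - m * ε)) _ y :=
      ((hut y hy).mul (hE t y hy)).div (hw t y hy) (hwne t y hy)
    exact (hev.deriv_eq).trans hF.deriv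
  have hev2 : deriv (U t) =ᶠ[nhds x] (fun y =>
      ((deriv (u t) y * Real.exp (m * v t y / (3 * l))
          + u t y * (Real.exp (m * v t y / (3 * l)) * (m * u t y / (3 * l))))
          * (Real.exp (m * v t y / (3 * l)) - m * ε)
        - u t y * Real.exp (m * v t y / (3 * l))
          * (Real.exp (m * v t y / (3 * l)) * (m * u t y / (3 * l))))
        / (Real.exp (m * v t y / (3 * l)) - m * ε) ^ 2) :=
    Filter.eventuallyEq_of_mem ((hS t).mem_nhds hxS) (fun y hy => hUloc y hy)
  -- second derivative of deriv (u t)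
  have hb : HasDerivAt (deriv (u t)) (deriv (deriv (u t)) x) x := by
    have hcd : ContDiffOn ℝ (⊤ : ℕ∞) (u t) {y : ℝ | (t, y) ∈ Ω} :=
      fun y hy => (slice_x hΩ hu hy).contDiffWithinAt
    exact (((hcd.deriv_of_isOpen (hS t) (WithTop.coe_le_coe.mpr le_top : (1 : WithTop ℕ∞) + 1 ≤ ((⊤ : ℕ∞) : WithTop ℕ∞))).differentiableOn
      one_ne_zero).differentiableAt ((hS t).mem_nhds hxS)).hasDerivAt
  -- derivative of the G expression at x
  have ha := hut x hmem
  have he := hE t x hmem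
  have hwd := hw t x hmem
  have hkd : HasDerivAt (fun y => m * u t y / (3 * l)) (m * deriv (u t) x / (3 * l)) x :=
    (ha.const_mul m).div_const (3 * l)
  have hnum1 := (hb.mul he).add (ha.mul (he.mul hkd))
  have hnum := (hnum1.mul hwd).sub ((ha.mul he).mul (he.mul hkd))
  have hden := hwd.pow 2
  have hG := hnum.div hden (pow_ne_zero 2 (hwne t x hmem))
  have e1 := (hev2.deriv_eq).trans hG.deriv
  -- time derivative of V at (t, x)
  have hT : IsOpen {s : ℝ | (s, x) ∈ Ω} :=
    hΩ.preimage (continuous_id.prodMk continuous_const)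
  have hvtd : HasDerivAt (fun s => v s x) (deriv (fun s => v s x) t) t :=
    ((slice_t hΩ hv hmem).differentiableAt (by simp)).hasDerivAt
  have hWt : HasDerivAt
      (fun s => (3 * l / m) * Real.log (Real.exp (m * v s x / (3 * l)) - m * ε))
      ((3 * l / m) * (Real.exp (m * v t x / (3 * l))
        * (m * deriv (fun s => v s x) t / (3 * l))
        / (Real.exp (m * v t x / (3 * l)) - m * ε))) t :=
    (((((hvtd.const_mul m).div_const (3 * l)).exp.sub_const (m * ε)).log
      (hwne t x hmem)).const_mul _)
  have hevT : (fun s => V s x) =ᶠ[nhds t]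
      (fun s => (3 * l / m) * Real.log (Real.exp (m * v s x / (3 * l)) - m * ε)) :=
    Filter.eventuallyEq_of_mem (hT.mem_nhds hmem) (fun s hs => hVdef s x hs)
  have e0 := (hevT.deriv_eq).trans hWt.deriv
  rw [e0, e1, hUloc x hmem, hUdef t x hmem, hvt t x hmem]
  have hwx := hwne t x hmem
  have h3l : (3 : ℝ) * l ≠ 0 := mul_ne_zero three_ne_zero hl
  have h9l : (9 : ℝ) * l ≠ 0 := mul_ne_zero (by norm_num) hl
  simp only [Pi.mul_apply, Pi.add_apply, Pi.sub_apply, Pi.pow_apply]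
  field_simp
  ring
end

section
/- Let λ ≠ 0, μ ≠ 0 be real, let u : ℝ² → ℝ solve u_t = ∂_x(λ·u_xx + μ·u·u_x + (μ²/(9λ))·u³), and let v be a smooth potential with v_x = u and v_t = λ u_xx + μ u u_x + (μ²/(9λ)) u³. If ε ∈ ℝ is such that exp(μv/(3λ)) − με > 0 everywhere, then U = u·exp(μv/(3λ))/(exp(μv/(3λ)) − με) is again a solution of U_t = ∂_x(λ·U_xx + μ·U·U_x + (μ²/(9λ))·U³). -/
private lemma sliceT {f : ℝ → ℝ → ℝ} (hf : ContDiff ℝ (⊤ : ℕ∞) (fun p : ℝ × ℝ => f p.1 p.2)) (t : ℝ) :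
    ContDiff ℝ (⊤ : ℕ∞) (f t) :=
  hf.comp (contDiff_const.prodMk contDiff_id)

private lemma sliceX {f : ℝ → ℝ → ℝ} (hf : ContDiff ℝ (⊤ : ℕ∞) (fun p : ℝ × ℝ => f p.1 p.2)) (x : ℝ) :
    ContDiff ℝ (⊤ : ℕ∞) (fun s => f s x) :=
  hf.comp (contDiff_id.prodMk contDiff_const)

private lemma deriv_swap {f : ℝ → ℝ → ℝ}
    (hf : ContDiff ℝ (⊤ : ℕ∞) (fun p : ℝ × ℝ => f p.1 p.2)) (t x : ℝ) :
    deriv (fun s => deriv (f s) x) t = deriv (fun y => deriv (fun s => f s y) t) x := by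
  set F : ℝ × ℝ → ℝ := fun p => f p.1 p.2 with hF
  have hdiff : Differentiable ℝ F := hf.differentiable (by simp)
  have hdF : ∀ p, HasFDerivAt F (fderiv ℝ F p) p := fun p => (hdiff p).hasFDerivAt
  have hF'cd : ContDiff ℝ (((⊤ : ℕ∞) : WithTop ℕ∞)) (fderiv ℝ F) := hf.fderiv_right (by simp)
  have hF'd : HasFDerivAt (fderiv ℝ F) (fderiv ℝ (fderiv ℝ F) (t, x)) (t, x) :=
    ((hF'cd.differentiable (by simp)) (t, x)).hasFDerivAt
  have key1 : ∀ s y, HasDerivAt (f s) (fderiv ℝ F (s, y) (0, 1)) y := fun s y =>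
    (hdF (s, y)).comp_hasDerivAt y (HasDerivAt.prodMk (hasDerivAt_const y s) (hasDerivAt_id y))
  have key2 : ∀ s y, HasDerivAt (fun s' => f s' y) (fderiv ℝ F (s, y) (1, 0)) s := fun s y =>
    by have := (hdF (s, y)).comp_hasDerivAt s (HasDerivAt.prodMk (hasDerivAt_id' s) (hasDerivAt_const s y)); exact this
  have e1 : (fun s => deriv (f s) x) = fun s => fderiv ℝ F (s, x) (0, 1) :=
    funext fun s => (key1 s x).deriv
  have e2 : (fun y => deriv (fun s => f s y) t) = fun y => fderiv ℝ F (t, y) (1, 0) :=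
    funext fun y => (key2 t y).deriv
  rw [e1, e2]
  have d1 : HasDerivAt (fun s => fderiv ℝ F (s, x)) (fderiv ℝ (fderiv ℝ F) (t, x) (1, 0)) t :=
    hF'd.comp_hasDerivAt t (HasDerivAt.prodMk (hasDerivAt_id t) (hasDerivAt_const t x))
  have d2 : HasDerivAt (fun y => fderiv ℝ F (t, y)) (fderiv ℝ (fderiv ℝ F) (t, x) (0, 1)) x :=
    hF'd.comp_hasDerivAt x (HasDerivAt.prodMk (hasDerivAt_const x t) (hasDerivAt_id x))
  have d1' : HasDerivAt (fun s => fderiv ℝ F (s, x) (0, 1))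
      (fderiv ℝ (fderiv ℝ F) (t, x) (1, 0) (0, 1)) t := by
    simpa using d1.clm_apply (hasDerivAt_const t ((0 : ℝ), (1 : ℝ)))
  have d2' : HasDerivAt (fun y => fderiv ℝ F (t, y) (1, 0))
      (fderiv ℝ (fderiv ℝ F) (t, x) (0, 1) (1, 0)) x := by
    simpa using d2.clm_apply (hasDerivAt_const x ((1 : ℝ), (0 : ℝ)))
  rw [d1'.deriv, d2'.deriv]
  exact second_derivative_symmetric hdF hF'd _ _

set_option maxHeartbeats 1000000 in
/-- The pure potential symmetry maps solutions of
`u_t = ∂ₓ(λ u_xx + μ u u_x + (μ²/(9λ)) u³)` to solutions. -/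
theorem potential_symmetry_maps_solutions
    (l m : ℝ) (hl : l ≠ 0) (hm : m ≠ 0)
    (u v : ℝ → ℝ → ℝ)
    (hu : ContDiff ℝ (⊤ : ℕ∞) (fun p : ℝ × ℝ => u p.1 p.2))
    (hv : ContDiff ℝ (⊤ : ℕ∞) (fun p : ℝ × ℝ => v p.1 p.2))
    (hupde : ∀ t x, deriv (fun s => u s x) t =
      deriv (fun y => l * deriv (deriv (u t)) y + m * u t y * deriv (u t) y
        + (m ^ 2 / (9 * l)) * (u t y) ^ 3) x)
    (hvx : ∀ t x, deriv (v t) x = u t x)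
    (hvt : ∀ t x, deriv (fun s => v s x) t =
      l * deriv (deriv (u t)) x + m * u t x * deriv (u t) x
        + (m ^ 2 / (9 * l)) * (u t x) ^ 3)
    (ε : ℝ)
    (hpos : ∀ t x, Real.exp (m * v t x / (3 * l)) - m * ε > 0)
    (U : ℝ → ℝ → ℝ)
    (hUdef : ∀ t x, U t x = u t x * Real.exp (m * v t x / (3 * l))
        / (Real.exp (m * v t x / (3 * l)) - m * ε)) :
    ∀ t x, deriv (fun s => U s x) t =
      deriv (fun y => l * deriv (deriv (U t)) y + m * U t y * deriv (U t) y
        + (m ^ 2 / (9 * l)) * (U t y) ^ 3) x := by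
  have hGne : ∀ s y, Real.exp (m * v s y / (3 * l)) - m * ε ≠ 0 := fun s y => ne_of_gt (hpos s y)
  -- pointwise derivative facts
  have hud : ∀ s y, HasDerivAt (u s) (deriv (u s) y) y := fun s y =>
    (((sliceT hu s).differentiable (by simp)) y).hasDerivAt
  have hu2 : ∀ s y, HasDerivAt (deriv (u s)) (deriv (deriv (u s)) y) y := fun s y => by
    have h := ((sliceT hu s).of_le (by simp)).iterate_deriv 1
    rw [Function.iterate_one] at h
    exact ((h.differentiable (by simp)) y).hasDerivAt
  have hvd : ∀ s y, HasDerivAt (v s) (u s y) y := fun s y => by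
    have h := (((sliceT hv s).differentiable (by simp)) y).hasDerivAt
    rwa [hvx] at h
  have hvtd : ∀ s y, HasDerivAt (fun s' => v s' y)
      (l * deriv (deriv (u s)) y + m * u s y * deriv (u s) y
        + (m ^ 2 / (9 * l)) * (u s y) ^ 3) s := fun s y => by
    have h := (((sliceX hv y).differentiable (by simp)) s).hasDerivAt
    rwa [hvt] at h
  have hExp : ∀ s y, HasDerivAt (fun z => Real.exp (m * v s z / (3 * l)))
      (Real.exp (m * v s y / (3 * l)) * (m * u s y / (3 * l))) y := fun s y =>
    (((hvd s y).const_mul m).div_const (3 * l)).exp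
  -- the potential of U : V s y = 3*l/m * log (exp (m*v/(3l)) - m*ε), with V_x = U
  have hVxeq : ∀ s y,
      deriv (fun z => 3 * l / m * Real.log (Real.exp (m * v s z / (3 * l)) - m * ε)) y
        = U s y := fun s y => by
    have h := (((hExp s y).sub_const (m * ε)).log (hGne s y)).const_mul (3 * l / m)
    have hG := hGne s y
    rw [h.deriv, hUdef s y]
    set E := Real.exp (m * v s y / (3 * l)) with hEdef
    field_simp
  have hVteq : ∀ s y,
      deriv (fun s' => 3 * l / m * Real.log (Real.exp (m * v s' y / (3 * l)) - m * ε)) s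
        = Real.exp (m * v s y / (3 * l)) / (Real.exp (m * v s y / (3 * l)) - m * ε)
          * (l * deriv (deriv (u s)) y + m * u s y * deriv (u s) y
            + m ^ 2 / (9 * l) * u s y ^ 3) := fun s y => by
    have hE : HasDerivAt (fun s' => Real.exp (m * v s' y / (3 * l)))
        (Real.exp (m * v s y / (3 * l)) * (m * (l * deriv (deriv (u s)) y
          + m * u s y * deriv (u s) y + (m ^ 2 / (9 * l)) * (u s y) ^ 3) / (3 * l))) s :=
      (((hvtd s y).const_mul m).div_const (3 * l)).exp
    have h := ((hE.sub_const (m * ε)).log (hGne s y)).const_mul (3 * l / m)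
    have hG := hGne s y
    rw [h.deriv]
    set E := Real.exp (m * v s y / (3 * l)) with hEdef
    field_simp
  have hVcd : ContDiff ℝ (⊤ : ℕ∞) (fun p : ℝ × ℝ =>
      3 * l / m * Real.log (Real.exp (m * v p.1 p.2 / (3 * l)) - m * ε)) := by
    have h0 : ContDiff ℝ (⊤ : ℕ∞) (fun p : ℝ × ℝ => m * v p.1 p.2 / (3 * l)) :=
      (contDiff_const.mul hv).div_const (3 * l)
    exact contDiff_const.mul
      (((Real.contDiff_exp.comp h0).sub contDiff_const).log fun p => hGne p.1 p.2)
  intro t x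
  -- formula for deriv (U t)
  have hUfun : U t = fun z => u t z * Real.exp (m * v t z / (3 * l))
      / (Real.exp (m * v t z / (3 * l)) - m * ε) := funext fun z => hUdef t z
  have hUxfun : deriv (U t) = fun z =>
      ((deriv (u t) z * Real.exp (m * v t z / (3 * l)) +
          u t z * (Real.exp (m * v t z / (3 * l)) * (m * u t z / (3 * l)))) *
          (Real.exp (m * v t z / (3 * l)) - m * ε) -
        u t z * Real.exp (m * v t z / (3 * l)) *
          (Real.exp (m * v t z / (3 * l)) * (m * u t z / (3 * l)))) /
        (Real.exp (m * v t z / (3 * l)) - m * ε) ^ 2 := by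
    funext z
    have h := ((hud t z).mul (hExp t z)).div ((hExp t z).sub_const (m * ε)) (hGne t z)
    rw [hUfun]
    exact h.deriv
  -- the main calculation
  have swap := deriv_swap
    (f := fun s y => 3 * l / m * Real.log (Real.exp (m * v s y / (3 * l)) - m * ε)) hVcd t x
  beta_reduce at swap
  rw [show (fun s => U s x)
      = (fun s => deriv (fun z => 3 * l / m
          * Real.log (Real.exp (m * v s z / (3 * l)) - m * ε)) x)
    from funext fun s => (hVxeq s x).symm, swap]
  congr 1
  funext y
  rw [hVteq t y, hUdef t y]
  simp only [hUxfun]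
  have hEp : HasDerivAt (fun z => Real.exp (m * v t z / (3 * l)) * (m * u t z / (3 * l)))
      (Real.exp (m * v t y / (3 * l)) * (m * u t y / (3 * l)) * (m * u t y / (3 * l))
        + Real.exp (m * v t y / (3 * l)) * (m * deriv (u t) y / (3 * l))) y :=
    (hExp t y).mul (((hud t y).const_mul m).div_const (3 * l))
  have hUxx : HasDerivAt (fun z =>
      ((deriv (u t) z * Real.exp (m * v t z / (3 * l)) +
          u t z * (Real.exp (m * v t z / (3 * l)) * (m * u t z / (3 * l)))) *
          (Real.exp (m * v t z / (3 * l)) - m * ε) -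
        u t z * Real.exp (m * v t z / (3 * l)) *
          (Real.exp (m * v t z / (3 * l)) * (m * u t z / (3 * l)))) /
        (Real.exp (m * v t z / (3 * l)) - m * ε) ^ 2) _ y :=
    (((((hu2 t y).mul (hExp t y)).add ((hud t y).mul hEp)).mul
        ((hExp t y).sub_const (m * ε))).sub
      (((hud t y).mul (hExp t y)).mul hEp)).div
      (((hExp t y).sub_const (m * ε)).pow 2) (pow_ne_zero 2 (hGne t y))
  have hG := hGne t y
  rw [hUxx.deriv]
  simp only [Pi.mul_apply, Pi.add_apply, Pi.sub_apply]
  set E := Real.exp (m * v t y / (3 * l)) with hEdef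
  push_cast
  field_simp
  ring
end

section
/- Let λ ≠ 0 and μ be real constants and set A(u) = λ, B(u) = μ·u, C(u) = (μ²/(9λ))·u³. Then the functions ξ⁰ = C₀, ξ¹ = C₁, α(t,x,v) = μ·C₂·e^{−μv/(3λ)}, β(t,x,v) = 0, η² (t,x,v) = −3λ·C₂·e^{−μv/(3λ)} + C₃ (with C₀, C₁, C₂, C₃ arbitrary real constants) satisfy all of the following determining equations for every u, t, x, v: (i) (αu+β)A'(u) = (3ξ¹_x − ξ⁰_t)A(u); (ii) (αu+β)B'(u) = (2ξ¹_x − ξ⁰_t)B(u) − 3(α_v u + α_x)A(u); (iii) (αu+β)C'(u) = (α + ξ¹_x − ξ⁰_t)C(u) − [α_v u² + (2α_x + ξ¹_xx)u + β_x]B(u) − [α_vv u³ + 3α_vx u² + (3α_xx + 2ξ¹_xxx)u + β_xx]A(u) − ξ¹_t u + η²_t; (iv) η²_v = α + ξ¹_x and η²_x = β. -/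
/-- Direct verification that the coefficients of the potential
symmetry generator solve the determining system \eqref{q81}--\eqref{q84}
for `A = λ`, `B = μu`, `C = (μ²/(9λ))u³`. -/
theorem potential_symmetry_solves_determining_system
    (l m C0 C1 C2 C3 : ℝ) (hl : l ≠ 0)
    (A B C : ℝ → ℝ)
    (hA : ∀ u, A u = l) (hB : ∀ u, B u = m * u)
    (hC : ∀ u, C u = (m ^ 2 / (9 * l)) * u ^ 3)
    (ξ0 : ℝ → ℝ) (ξ1 : ℝ → ℝ → ℝ) (α β η2 : ℝ → ℝ → ℝ → ℝ)
    (hξ0 : ∀ t, ξ0 t = C0) (hξ1 : ∀ t x, ξ1 t x = C1)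
    (hα : ∀ t x v, α t x v = m * C2 * Real.exp (-m * v / (3 * l)))
    (hβ : ∀ t x v, β t x v = 0)
    (hη2 : ∀ t x v, η2 t x v = -3 * l * C2 * Real.exp (-m * v / (3 * l)) + C3) :
    ∀ u t x v : ℝ,
      -- (i)
      ((α t x v * u + β t x v) * deriv A u
        = (3 * deriv (fun y => ξ1 t y) x - deriv ξ0 t) * A u) ∧
      -- (ii)
      ((α t x v * u + β t x v) * deriv B u
        = (2 * deriv (fun y => ξ1 t y) x - deriv ξ0 t) * B u
          - 3 * (deriv (fun w => α t x w) v * u + deriv (fun y => α t y v) x) * A u) ∧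
      -- (iii)
      ((α t x v * u + β t x v) * deriv C u
        = (α t x v + deriv (fun y => ξ1 t y) x - deriv ξ0 t) * C u
          - (deriv (fun w => α t x w) v * u ^ 2
              + (2 * deriv (fun y => α t y v) x
                  + deriv (deriv (fun y => ξ1 t y)) x) * u
              + deriv (fun y => β t y v) x) * B u
          - (deriv (deriv (fun w => α t x w)) v * u ^ 3
              + 3 * deriv (fun y => deriv (fun w => α t y w) v) x * u ^ 2
              + (3 * deriv (deriv (fun y => α t y v)) x
                  + 2 * deriv (deriv (deriv (fun y => ξ1 t y))) x) * u
              + deriv (deriv (fun y => β t y v)) x) * A u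
          - deriv (fun s => ξ1 s x) t * u + deriv (fun s => η2 s x v) t) ∧
      -- (iv)
      (deriv (fun w => η2 t x w) v = α t x v + deriv (fun y => ξ1 t y) x) ∧
      (deriv (fun y => η2 t y v) x = β t x v) := by
  have hexp : ∀ (a c w : ℝ), HasDerivAt (fun s => a * Real.exp (c * s))
      (a * c * Real.exp (c * w)) w := by
    intro a c w
    have h := (((hasDerivAt_id w).const_mul c).exp).const_mul a
    simpa [mul_comm, mul_assoc, mul_left_comm] using h
  have hderiv_exp : ∀ (a c : ℝ), deriv (fun s => a * Real.exp (c * s))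
      = fun s => a * c * Real.exp (c * s) := by
    intro a c; funext w; exact (hexp a c w).deriv
  intro u t x v
  set c : ℝ := -m / (3 * l) with hc
  have hAe : A = fun _ => l := funext hA
  have hBe : B = fun y => m * y := funext hB
  have hCe : C = fun y => (m ^ 2 / (9 * l)) * y ^ 3 := funext hC
  have hξ0e : ξ0 = fun _ => C0 := funext hξ0
  have hξ1e : (fun y => ξ1 t y) = fun _ => C1 := funext (hξ1 t)
  have hξ1t : (fun s => ξ1 s x) = fun _ => C1 := funext (fun s => hξ1 s x)
  have harg : ∀ w : ℝ, -m * w / (3 * l) = c * w := by intro w; rw [hc]; ring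
  have hαv : (fun w => α t x w) = fun w => (m * C2) * Real.exp (c * w) := by
    funext w; rw [hα, harg]
  have hαx : (fun y => α t y v) = fun _ => (m * C2) * Real.exp (c * v) := by
    funext y; rw [hα, harg]
  have hβx : (fun y => β t y v) = fun _ => (0 : ℝ) := funext (fun y => hβ t y v)
  have hη2v : (fun w => η2 t x w) = fun w => (-3 * l * C2) * Real.exp (c * w) + C3 := by
    funext w; rw [hη2, harg]
  have hη2x : (fun y => η2 t y v) = fun _ => (-3 * l * C2) * Real.exp (c * v) + C3 := by
    funext y; rw [hη2, harg]
  have hη2t : (fun s => η2 s x v) = fun _ => (-3 * l * C2) * Real.exp (c * v) + C3 := by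
    funext s; rw [hη2, harg]
  -- basic derivative values
  have dA : deriv A u = 0 := by rw [hAe]; simp
  have dB : deriv B u = m := by
    rw [hBe]; simpa using ((hasDerivAt_id u).const_mul m).deriv
  have dC : deriv C u = (m ^ 2 / (9 * l)) * (3 * u ^ 2) := by
    rw [hCe]
    have h := ((hasDerivAt_pow 3 u).const_mul (m ^ 2 / (9 * l))).deriv
    rw [h]; ring
  have dξ0 : deriv ξ0 t = 0 := by rw [hξ0e]; simp
  have dξ1 : deriv (fun y => ξ1 t y) x = 0 := by rw [hξ1e]; simp
  have dξ1t : deriv (fun s => ξ1 s x) t = 0 := by rw [hξ1t]; simp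
  have ddξ1 : deriv (deriv (fun y => ξ1 t y)) x = 0 := by rw [hξ1e]; simp
  have dddξ1 : deriv (deriv (deriv (fun y => ξ1 t y))) x = 0 := by rw [hξ1e]; simp
  have dαv : deriv (fun w => α t x w) v = (m * C2) * c * Real.exp (c * v) := by
    rw [hαv]; exact (hexp _ _ _).deriv
  have ddαv : deriv (deriv (fun w => α t x w)) v
      = (m * C2) * c * c * Real.exp (c * v) := by
    rw [hαv, hderiv_exp]
    have := (hexp (m * C2 * c) c v).deriv
    simpa [mul_assoc] using this
  have dαx : deriv (fun y => α t y v) x = 0 := by rw [hαx]; simp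
  have ddαx : deriv (deriv (fun y => α t y v)) x = 0 := by rw [hαx]; simp
  have dmix : deriv (fun y => deriv (fun w => α t y w) v) x = 0 := by
    have : (fun y => deriv (fun w => α t y w) v)
        = fun _ => (m * C2) * c * Real.exp (c * v) := by
      funext y
      have h : (fun w => α t y w) = fun w => (m * C2) * Real.exp (c * w) := by
        funext w; rw [hα, harg]
      rw [h]; exact (hexp _ _ _).deriv
    rw [this]; simp
  have dβx : deriv (fun y => β t y v) x = 0 := by rw [hβx]; simp
  have ddβx : deriv (deriv (fun y => β t y v)) x = 0 := by rw [hβx]; simp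
  have dη2v : deriv (fun w => η2 t x w) v = (-3 * l * C2) * c * Real.exp (c * v) := by
    rw [hη2v]
    exact ((hexp (-3 * l * C2) c v).add_const C3).deriv
  have dη2x : deriv (fun y => η2 t y v) x = 0 := by rw [hη2x]; simp
  have dη2t : deriv (fun s => η2 s x v) t = 0 := by rw [hη2t]; simp
  refine ⟨?_, ?_, ?_, ?_, ?_⟩
  · rw [dA, dξ1, dξ0, hβ, hA]; ring
  · rw [dB, dξ1, dξ0, dαv, dαx, hβ, hA, hB, hα, harg, hc]; field_simp; ring
  · rw [dC, dξ1, dξ0, dαv, ddαv, dαx, ddαx, dmix, ddξ1, dddξ1, dβx, ddβx,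
      dξ1t, dη2t, hβ, hA, hB, hC, hα, harg, hc]
    field_simp
    ring
  · rw [dη2v, dξ1, hα, harg, hc]
    field_simp
    ring
  · rw [dη2x, hβ]
end
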